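/- Let n ≥ 3 and let m_1 < ... < m_n be a generalized arithmetic sequence with m_i = h·m_1 + (i-1)d for i ≥ 2, h > 1, h | d, gcd(m_1, d) = 1. Write m_1 = p(n-1) + s with s ∈ {1,...,n-1} and set δ := ph + d + h. Then δ = min { b ∈ ℤ⁺ : b·m_1 ∈ ℕm_2 + ... + ℕm_n }. -/

import Mathlib

/-!
Write a representation `b * m₁ = ∑ δᵢ mᵢ` as `b * m₁ = A * (h * m₁) + B * d` with `A = ∑ δᵢ` and
`B = ∑ δᵢ (i - 1)`, so that `A ≤ B ≤ A (n - 1)`. Since `gcd(m₁, d) = 1`, `m₁` divides `B`, and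
`B ≠ 0` because `b > 0`; hence `B ≥ m₁ = p (n - 1) + s > p (n - 1)`, which forces `A ≥ p + 1` and
`b ≥ (p + 1) h + d`. The bound is attained by `δₙ = p`, `δ_{s+1} = 1`, for which `A = p + 1`
and `B = m₁`.
-/

open Finset

theorem sum_mul_eq_of_affine {S : Finset ℕ} {m c : ℕ → ℕ} {a d : ℕ}
    (hm : ∀ i ∈ S, m i = a + c i * d) (δ : ℕ → ℕ) :
    ∑ i ∈ S, δ i * m i = (∑ i ∈ S, δ i) * a + (∑ i ∈ S, δ i * c i) * d := by
  rw [sum_mul, sum_mul, ← sum_add_distrib]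
  refine sum_congr rfl fun i hi => ?_
  rw [hm i hi]
  ring

theorem sum_le_sum_mul_pred (δ : ℕ → ℕ) (n : ℕ) :
    ∑ i ∈ Icc 2 n, δ i ≤ ∑ i ∈ Icc 2 n, δ i * (i - 1) :=
  sum_le_sum fun i hi => Nat.le_mul_of_pos_right _ (by grind)

theorem sum_mul_pred_le (δ : ℕ → ℕ) (n : ℕ) :
    ∑ i ∈ Icc 2 n, δ i * (i - 1) ≤ (∑ i ∈ Icc 2 n, δ i) * (n - 1) := by
  rw [sum_mul]
  exact sum_le_sum fun i hi => Nat.mul_le_mul_left _ (by grind)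

theorem Nat.dvd_of_mul_eq_mul_add_mul {m d b k B : ℕ} (hmd : Nat.Coprime m d)
    (h : b * m = k * m + B * d) : m ∣ B :=
  hmd.dvd_of_dvd_mul_right <| (Nat.dvd_add_right (dvd_mul_left m k)).mp (h ▸ dvd_mul_left m b)

theorem le_of_mul_eq_of_weight_bounds {n h d m1 p s b A B : ℕ} (hgcd : Nat.Coprime m1 d)
    (hdiv : m1 = p * (n - 1) + s) (hs : 1 ≤ s) (hb : 0 < b)
    (hAB : A ≤ B) (hBA : B ≤ A * (n - 1)) (key : b * m1 = A * (h * m1) + B * d) :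
    p * h + d + h ≤ b := by
  have hm1 : 0 < m1 := by omega
  have hB0 : B ≠ 0 := by
    rintro rfl
    obtain rfl : A = 0 := by omega
    simp only [zero_mul, add_zero, mul_eq_zero] at key
    omega
  have hB : m1 ≤ B :=
    Nat.le_of_dvd (Nat.pos_of_ne_zero hB0)
      (Nat.dvd_of_mul_eq_mul_add_mul (k := A * h) hgcd (by rw [key, mul_assoc]))
  have hA : p + 1 ≤ A := Nat.lt_of_mul_lt_mul_right (a := n - 1) (by omega)
  refine Nat.le_of_mul_le_mul_right ?_ hm1
  calc (p * h + d + h) * m1 = (p + 1) * (h * m1) + m1 * d := by ring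
    _ ≤ A * (h * m1) + B * d := by gcongr
    _ = b * m1 := key.symm

theorem exists_weights_mul_eq {n h d m1 p s : ℕ} {m : ℕ → ℕ}
    (hm : ∀ i ∈ Icc 2 n, m i = h * m1 + (i - 1) * d)
    (hdiv : m1 = p * (n - 1) + s) (hs1 : 1 ≤ s) (hs2 : s ≤ n - 1) :
    ∃ δ : ℕ → ℕ, (p * h + d + h) * m1 = ∑ i ∈ Icc 2 n, δ i * m i := by
  refine ⟨fun i => (if i = n then p else 0) + (if i = s + 1 then 1 else 0), ?_⟩
  have hn : n ∈ Icc 2 n := mem_Icc.2 ⟨by omega, le_rfl⟩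
  have hs : s + 1 ∈ Icc 2 n := mem_Icc.2 ⟨by omega, by omega⟩
  rw [sum_mul_eq_of_affine hm]
  simp only [add_mul, ite_mul, zero_mul, one_mul, sum_add_distrib, sum_ite_eq', hn, hs,
    if_true, add_tsub_cancel_right, ← hdiv]
  ring

theorem stmt_9_general (n h d m1 p s : ℕ) (m : ℕ → ℕ)
    (hd : 1 ≤ d)
    (hgcd : Nat.gcd m1 d = 1)
    (hm : ∀ i, 2 ≤ i → i ≤ n → m i = h * m1 + (i - 1) * d)
    (hdiv : m1 = p * (n - 1) + s) (hs1 : 1 ≤ s) (hs2 : s ≤ n - 1) :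
    IsLeast {b : ℕ | 0 < b ∧
        ∃ δ : ℕ → ℕ, b * m1 = ∑ i ∈ Finset.Icc 2 n, δ i * m i}
      (p * h + d + h) := by
  have hm' : ∀ i ∈ Icc 2 n, m i = h * m1 + (i - 1) * d := fun i hi =>
    hm i (mem_Icc.1 hi).1 (mem_Icc.1 hi).2
  refine ⟨⟨by omega, exists_weights_mul_eq hm' hdiv hs1 hs2⟩, ?_⟩
  rintro b ⟨hb, δ, heq⟩
  rw [sum_mul_eq_of_affine hm'] at heq
  exact le_of_mul_eq_of_weight_bounds hgcd hdiv hs1 hb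
    (sum_le_sum_mul_pred δ n) (sum_mul_pred_le δ n) heq

/-- δ is the least positive b with b·m₁ in the semigroup generated by m₂,…,mₙ. -/
theorem stmt_9 (n h d m1 p s : ℕ) (m : ℕ → ℕ)
    (hn : 3 ≤ n) (hh : 2 ≤ h) (hd : 1 ≤ d) (hm1 : 1 ≤ m1)
    (hdvd : h ∣ d) (hgcd : Nat.gcd m1 d = 1)
    (hm0 : m 1 = m1)
    (hm : ∀ i, 2 ≤ i → i ≤ n → m i = h * m1 + (i - 1) * d)
    (hdiv : m1 = p * (n - 1) + s) (hs1 : 1 ≤ s) (hs2 : s ≤ n - 1) :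
    IsLeast {b : ℕ | 0 < b ∧
        ∃ δ : ℕ → ℕ, b * m1 = ∑ i ∈ Finset.Icc 2 n, δ i * m i}
      (p * h + d + h) :=
  stmt_9_general n h d m1 p s m hd hgcd hm hdiv hs1 hs2
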